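/- In the data-model setting, for each n ∈ ℕ let T_n be a set of nuisance vectors η = (g₁, g₀, e₁, p), each with p, e₁ measurable and valued in (0,1) and satisfying p(x) ≥ 1/C̄, e₁(x) ≥ 1/C̄, 1 − e₁(x) ≥ 1/C̄ and |g_a(x)| ≤ C̄ for all x and a ∈ {0,1} (C̄ ≥ 1), and define 𝐠_n := sup_{η ∈ T_n} max_{a ∈ {0,1}} √(E[(g_a(X) − g_{a0}(X))²]), 𝐞_n := sup_{η ∈ T_n} √(E[(e₁(X) − e₁₀(X))²]), 𝐩_n := sup_{η ∈ T_n} √(E[(p(X) − p₀(X))²]) (assumed finite). Assume p₀(x) ≥ ε_p, ε_e ≤ e₁₀(x) ≤ 1 − ε_e for constants ε_p, ε_e ∈ (0,1), and for a ∈ {0,1}, E[1{S=1, A=a}·(Y − g_{a0}(X))² | σ(X)] ≤ σ̄²·p₀(X)·e_{a0}(X) almost surely for some σ̄² < ∞. If max(𝐠_n, 𝐞_n, 𝐩_n) → 0 as n → ∞, then sup_{η ∈ T_n} E[(1{G(X) = i}·(𝒴(η) − 𝒴(η₀)))²] → 0. -/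

import Mathlib

open MeasureTheory ProbabilityTheory Filter Topology

/-- The unweighted transported doubly-robust signal 𝒴(η), for a nuisance vector
`η = (g₁, g₀, e₁, p)`. -/
noncomputable def transportedSignal {Ω 𝒳 : Type*} (X : Ω → 𝒳) (S A Y : Ω → ℝ)
    (η : (𝒳 → ℝ) × (𝒳 → ℝ) × (𝒳 → ℝ) × (𝒳 → ℝ)) (ω : Ω) : ℝ :=
  (1 - S ω) * (η.1 (X ω) - η.2.1 (X ω)) +
    S ω * ((1 - η.2.2.2 (X ω)) / η.2.2.2 (X ω)) * (A ω - η.2.2.1 (X ω)) *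
      (Y ω - (A ω * η.1 (X ω) + (1 - A ω) * η.2.1 (X ω))) /
        (η.2.2.1 (X ω) * (1 - η.2.2.1 (X ω)))

private lemma memLp_two_condexp {α : Type*} {m m0 : MeasurableSpace α} (hm : m ≤ m0)
    (μ : Measure α) [IsFiniteMeasure μ] {f : α → ℝ} (hf : MemLp f 2 μ) :
    MemLp (μ[f|m]) 2 μ := by
  haveI : SigmaFinite (μ.trim hm) := by
    have : IsFiniteMeasure (μ.trim hm) := isFiniteMeasure_trim hm
    infer_instance
  set fL := hf.toLp f with hfL
  have h1 : AEStronglyMeasurable[m] ((condExpL2 ℝ ℝ hm fL : Lp ℝ 2 μ) : α → ℝ) μ :=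
    lpMeas.aestronglyMeasurable _
  have heq : ((condExpL2 ℝ ℝ hm fL : Lp ℝ 2 μ) : α → ℝ) =ᵐ[μ] μ[f|m] := by
    refine ae_eq_condExp_of_forall_setIntegral_eq hm (hf.integrable one_le_two)
      (fun s _ _ => ((Lp.memLp _).integrable one_le_two).integrableOn)
      (fun s hs hμs => ?_) h1
    rw [integral_condExpL2_eq hm fL hs hμs.ne]
    exact setIntegral_congr_ae (hm s hs) ((hf.coeFn_toLp).mono fun x hx _ => hx)
  exact (Lp.memLp _).ae_eq heq

private lemma six_sq (a b c d e f : ℝ) :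
    (a + b + c + d + e + f) ^ 2 ≤ 6 * (a^2 + b^2 + c^2 + d^2 + e^2 + f^2) := by
  nlinarith [sq_nonneg (a-b), sq_nonneg (a-c), sq_nonneg (a-d), sq_nonneg (a-e), sq_nonneg (a-f),
    sq_nonneg (b-c), sq_nonneg (b-d), sq_nonneg (b-e), sq_nonneg (b-f),
    sq_nonneg (c-d), sq_nonneg (c-e), sq_nonneg (c-f),
    sq_nonneg (d-e), sq_nonneg (d-f), sq_nonneg (e-f)]

private lemma signal_decomp (s a y G1 G0 E Pp G10 G00 E0 P0 : ℝ)
    (hs : s = 0 ∨ s = 1) (ha : a = 0 ∨ a = 1)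
    (hE : E ≠ 0) (hE1 : 1 - E ≠ 0) (hPp : Pp ≠ 0)
    (hE0 : E0 ≠ 0) (hE01 : 1 - E0 ≠ 0) (hP0 : P0 ≠ 0) :
    ((1 - s) * (G1 - G0) +
        s * ((1 - Pp) / Pp) * (a - E) * (y - (a * G1 + (1 - a) * G0)) / (E * (1 - E))) -
      ((1 - s) * (G10 - G00) +
        s * ((1 - P0) / P0) * (a - E0) * (y - (a * G10 + (1 - a) * G00)) / (E0 * (1 - E0)))
    = (1 - s) * (G1 - G10) + (-((1 - s) * (G0 - G00))) +
      s * a * ((1 - Pp)/(Pp * E) - (1 - P0)/(P0 * E0)) * (y - G10) +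
      (-(s * a * ((1 - Pp)/(Pp * E)) * (G1 - G10))) +
      (-(s * (1 - a) * ((1 - Pp)/(Pp * (1 - E)) - (1 - P0)/(P0 * (1 - E0))) * (y - G00))) +
      s * (1 - a) * ((1 - Pp)/(Pp * (1 - E))) * (G0 - G00) := by
  rcases hs with hs | hs <;> rcases ha with ha | ha <;> subst hs ha <;>
    field_simp <;> ring


private lemma Fdiff_sq_le {Cbar εp εe p p₀ e e₀ : ℝ} (hC : 1 ≤ Cbar)
    (hεp : 0 < εp) (hεe : 0 < εe)
    (hp : 1/Cbar ≤ p) (hp1 : p ≤ 1) (hp₀ : εp ≤ p₀) (hp₀1 : p₀ ≤ 1)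
    (he : 1/Cbar ≤ e) (he1 : e ≤ 1) (he₀ : εe ≤ e₀) (he₀1 : e₀ ≤ 1) :
    ((1 - p)/(p * e) - (1 - p₀)/(p₀ * e₀)) ^ 2
      ≤ 2 * (Cbar^2/(εp * εe))^2 * ((p - p₀)^2 + (e - e₀)^2) := by
  have hC0 : (0:ℝ) < Cbar := lt_of_lt_of_le one_pos hC
  have hCi : (0:ℝ) < 1/Cbar := by positivity
  have hp0 : 0 < p := lt_of_lt_of_le hCi hp
  have hp₀0 : 0 < p₀ := lt_of_lt_of_le hεp hp₀
  have he0 : 0 < e := lt_of_lt_of_le hCi he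
  have he₀0 : 0 < e₀ := lt_of_lt_of_le hεe he₀
  have hεe1 : εe ≤ 1 := le_trans he₀ he₀1
  have hεp1 : εp ≤ 1 := le_trans hp₀ hp₀1
  set L := Cbar^2/(εp * εe) with hL
  have hL0 : 0 < L := by positivity
  have hkey : (1 - p)/(p * e) - (1 - p₀)/(p₀ * e₀)
      = (p₀ - p) * (1/(p * p₀ * e)) + (e₀ - e) * ((1 - p₀)/(p₀ * e * e₀)) := by
    field_simp
    ring
  have hA : (1/(p * p₀ * e)) ≤ L := by
    have h1 : 1/(p * p₀ * e) ≤ 1/((1/Cbar) * εp * (1/Cbar)) := by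
      apply one_div_le_one_div_of_le (by positivity)
      gcongr
    have h2 : 1/((1/Cbar) * εp * (1/Cbar)) = Cbar^2/εp := by
      field_simp
    rw [h2] at h1
    refine h1.trans ?_
    rw [hL]
    gcongr
    nlinarith
  have hB : ((1 - p₀)/(p₀ * e * e₀)) ≤ L := by
    have h1 : (1 - p₀)/(p₀ * e * e₀) ≤ 1/(εp * (1/Cbar) * εe) := by
      apply div_le_div₀ (by positivity) (by linarith) (by positivity)
      gcongr
    have h2 : 1/(εp * (1/Cbar) * εe) = Cbar/(εp * εe) := by
      field_simp
    rw [h2] at h1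
    refine h1.trans ?_
    rw [hL]
    gcongr
    nlinarith
  have hcA0 : 0 ≤ 1/(p * p₀ * e) := by positivity
  have hcB0 : 0 ≤ (1 - p₀)/(p₀ * e * e₀) := div_nonneg (by linarith) (by positivity)
  have hA2 : (1/(p * p₀ * e))^2 ≤ L^2 := pow_le_pow_left₀ hcA0 hA 2
  have hB2 : ((1 - p₀)/(p₀ * e * e₀))^2 ≤ L^2 := pow_le_pow_left₀ hcB0 hB 2
  rw [hkey]
  nlinarith [sq_nonneg ((p₀ - p) * (1/(p * p₀ * e)) - (e₀ - e) * ((1 - p₀)/(p₀ * e * e₀))),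
    mul_le_mul_of_nonneg_left hA2 (sq_nonneg (p₀ - p)),
    mul_le_mul_of_nonneg_left hB2 (sq_nonneg (e₀ - e))]

private lemma F_pair_bounds {p e a b : ℝ} (ha : 0 < a) (hb : 0 < b)
    (hp : a ≤ p) (hp1 : p ≤ 1) (he : b ≤ e) :
    0 ≤ (1 - p)/(p * e) ∧ (1 - p)/(p * e) ≤ 1/(a * b) := by
  have hp0 : 0 < p := lt_of_lt_of_le ha hp
  have he0 : 0 < e := lt_of_lt_of_le hb he
  constructor
  · exact div_nonneg (by linarith) (by positivity)
  · apply div_le_div₀ (by positivity) (by linarith) (by positivity)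
    exact mul_le_mul hp he hb.le hp0.le

set_option maxHeartbeats 2000000 in
private lemma per_eta_bound
    {Ω : Type*} [MeasurableSpace Ω] (P : Measure Ω) [IsProbabilityMeasure P]
    {𝒳 : Type*} [MeasurableSpace 𝒳]
    (X : Ω → 𝒳) (S A Y : Ω → ℝ)
    (hX : Measurable X) (hS : Measurable S) (hA : Measurable A) (hY : Measurable Y)
    (hSval : ∀ ω, S ω = 0 ∨ S ω = 1) (hAval : ∀ ω, A ω = 0 ∨ A ω = 1)
    (hY2 : MemLp Y 2 P)
    {d : ℕ} (G : 𝒳 → Fin d) (i : Fin d)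
    (p₀ e₁₀ g₁₀ g₀₀ : 𝒳 → ℝ)
    (hp₀m : Measurable p₀) (he₁₀m : Measurable e₁₀)
    (hg₁₀m : Measurable g₁₀) (hg₀₀m : Measurable g₀₀)
    (hg₁₀L2 : MemLp (fun ω => g₁₀ (X ω)) 2 P) (hg₀₀L2 : MemLp (fun ω => g₀₀ (X ω)) 2 P)
    (hp₀val : ∀ x, p₀ x ∈ Set.Ioc (0 : ℝ) 1) (he₁₀val : ∀ x, e₁₀ x ∈ Set.Ioo (0 : ℝ) 1)
    (Cbar : ℝ) (hCbar : 1 ≤ Cbar)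
    (εp εe : ℝ) (hεp : 0 < εp) (hεe : 0 < εe)
    (hp₀bound : ∀ x, εp ≤ p₀ x) (he₁₀bound : ∀ x, εe ≤ e₁₀ x ∧ e₁₀ x ≤ 1 - εe)
    (σ2 : ℝ) (hσ2 : 0 ≤ σ2)
    (hc1 : (P[fun ω' => (if S ω' = 1 ∧ A ω' = 1 then (1 : ℝ) else 0) * (Y ω' - g₁₀ (X ω')) ^ 2 |
        MeasurableSpace.comap X inferInstance]) ≤ᵐ[P] fun _ => σ2)
    (hc0 : (P[fun ω' => (if S ω' = 1 ∧ A ω' = 0 then (1 : ℝ) else 0) * (Y ω' - g₀₀ (X ω')) ^ 2 |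
        MeasurableSpace.comap X inferInstance]) ≤ᵐ[P] fun _ => σ2)
    (g₁ g₀ e₁ pp : 𝒳 → ℝ)
    (hg₁m : Measurable g₁) (hg₀m : Measurable g₀) (he₁m : Measurable e₁) (hppm : Measurable pp)
    (he₁v : ∀ x, e₁ x ∈ Set.Ioo (0:ℝ) 1) (hppv : ∀ x, pp x ∈ Set.Ioo (0:ℝ) 1)
    (hppb : ∀ x, 1/Cbar ≤ pp x) (he₁b : ∀ x, 1/Cbar ≤ e₁ x) (he₁b' : ∀ x, 1/Cbar ≤ 1 - e₁ x)
    (hg₁b : ∀ x, |g₁ x| ≤ Cbar) (hg₀b : ∀ x, |g₀ x| ≤ Cbar) :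
    ∫ ω, ((if G (X ω) = i then (1:ℝ) else 0) *
        (transportedSignal X S A Y (g₁, g₀, e₁, pp) ω -
         transportedSignal X S A Y (g₁₀, g₀₀, e₁₀, p₀) ω)) ^ 2 ∂P
      ≤ (6 * (1 + Cbar^4) + 24 * σ2 * (Cbar^2/(εp*εe))^2) *
        ((∫ ω, (g₁ (X ω) - g₁₀ (X ω))^2 ∂P) + (∫ ω, (g₀ (X ω) - g₀₀ (X ω))^2 ∂P) +
         (∫ ω, (e₁ (X ω) - e₁₀ (X ω))^2 ∂P) + (∫ ω, (pp (X ω) - p₀ (X ω))^2 ∂P)) := by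
  classical
  have hmle := hX.comap_le
  haveI : SigmaFinite (P.trim hmle) := by
    have : IsFiniteMeasure (P.trim hmle) := isFiniteMeasure_trim hmle
    infer_instance
  have hXm' : Measurable[MeasurableSpace.comap X inferInstance] X := fun s hs => ⟨s, hs, rfl⟩
  have hC0 : (0:ℝ) < Cbar := lt_of_lt_of_le one_pos hCbar
  have hCi : (0:ℝ) < 1/Cbar := by positivity
  set L : ℝ := Cbar^2/(εp*εe) with hLdef
  have hL0 : 0 < L := by positivity
  set B : ℝ := Cbar^2 + 1/(εp*εe) with hBdef
  have hB0 : 0 < B := by positivity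
  have hεpe : (0:ℝ) ≤ 1/(εp*εe) := by positivity
  -- the nuisance ratio functions
  set F1 : 𝒳 → ℝ := fun x => (1 - pp x) / (pp x * e₁ x) with hF1def
  set F10 : 𝒳 → ℝ := fun x => (1 - p₀ x) / (p₀ x * e₁₀ x) with hF10def
  set F0 : 𝒳 → ℝ := fun x => (1 - pp x) / (pp x * (1 - e₁ x)) with hF0def
  set F00 : 𝒳 → ℝ := fun x => (1 - p₀ x) / (p₀ x * (1 - e₁₀ x)) with hF00def
  have hF1x : ∀ x, 0 ≤ F1 x ∧ F1 x ≤ Cbar^2 := by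
    intro x
    have h := F_pair_bounds (a := 1/Cbar) (b := 1/Cbar) hCi hCi (hppb x) (hppv x).2.le (he₁b x)
    have h2 : 1/((1/Cbar)*(1/Cbar)) = Cbar^2 := by field_simp
    rw [h2] at h
    exact h
  have hF0x : ∀ x, 0 ≤ F0 x ∧ F0 x ≤ Cbar^2 := by
    intro x
    have h := F_pair_bounds (a := 1/Cbar) (b := 1/Cbar) hCi hCi (hppb x) (hppv x).2.le (he₁b' x)
    have h2 : 1/((1/Cbar)*(1/Cbar)) = Cbar^2 := by field_simp
    rw [h2] at h
    exact h
  have hF10x : ∀ x, 0 ≤ F10 x ∧ F10 x ≤ 1/(εp*εe) :=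
    fun x => F_pair_bounds hεp hεe (hp₀bound x) (hp₀val x).2 (he₁₀bound x).1
  have hF00x : ∀ x, 0 ≤ F00 x ∧ F00 x ≤ 1/(εp*εe) :=
    fun x => F_pair_bounds hεp hεe (hp₀bound x) (hp₀val x).2 (by linarith [(he₁₀bound x).2])
  have hF1d : ∀ x, |F1 x - F10 x| ≤ B := by
    intro x
    rw [abs_le, hBdef]
    constructor <;> [linarith [(hF1x x).1, (hF10x x).2, sq_nonneg Cbar, hεpe]; linarith [(hF1x x).2, (hF10x x).1, sq_nonneg Cbar, hεpe]]
  have hF0d : ∀ x, |F0 x - F00 x| ≤ B := by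
    intro x
    rw [abs_le, hBdef]
    constructor <;> [linarith [(hF0x x).1, (hF00x x).2, sq_nonneg Cbar, hεpe]; linarith [(hF0x x).2, (hF00x x).1, sq_nonneg Cbar, hεpe]]
  -- S, A bounds
  have hS01 : ∀ ω, 0 ≤ S ω ∧ S ω ≤ 1 := by
    intro ω; rcases hSval ω with h | h <;> rw [h] <;> norm_num
  have hA01 : ∀ ω, 0 ≤ A ω ∧ A ω ≤ 1 := by
    intro ω; rcases hAval ω with h | h <;> rw [h] <;> norm_num
  -- measurability of the ratio functions
  have hppne : ∀ x, pp x ≠ 0 := fun x => (hppv x).1.ne'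
  have he₁ne : ∀ x, e₁ x ≠ 0 := fun x => (he₁v x).1.ne'
  have he₁ne' : ∀ x, 1 - e₁ x ≠ 0 := fun x => by have := (he₁v x).2; intro h; linarith [h]
  have hp₀ne : ∀ x, p₀ x ≠ 0 := fun x => (hp₀val x).1.ne'
  have he₁₀ne : ∀ x, e₁₀ x ≠ 0 := fun x => (he₁₀val x).1.ne'
  have he₁₀ne' : ∀ x, 1 - e₁₀ x ≠ 0 := fun x => by have := (he₁₀val x).2; intro h; linarith [h]
  have hF1m : Measurable F1 := (measurable_const.sub hppm).div (hppm.mul he₁m)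
  have hF10m : Measurable F10 := (measurable_const.sub hp₀m).div (hp₀m.mul he₁₀m)
  have hF0m : Measurable F0 := (measurable_const.sub hppm).div (hppm.mul (measurable_const.sub he₁m))
  have hF00m : Measurable F00 :=
    (measurable_const.sub hp₀m).div (hp₀m.mul (measurable_const.sub he₁₀m))
  -- a helper: bounded measurable functions are integrable
  have hbd_int : ∀ (f : Ω → ℝ), Measurable f → ∀ C : ℝ, (∀ ω, |f ω| ≤ C) → Integrable f P := by
    intro f hf C h
    have hb : MemLp f 1 P := MemLp.of_bound hf.aestronglyMeasurable C
      (ae_of_all _ (by simpa [Real.norm_eq_abs] using h))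
    exact memLp_one_iff_integrable.mp hb
  -- MemLp facts
  have hg₁X2 : MemLp (fun ω => g₁ (X ω)) 2 P :=
    MemLp.of_bound (hg₁m.comp hX).aestronglyMeasurable Cbar
      (ae_of_all _ fun ω => by simpa [Real.norm_eq_abs] using hg₁b (X ω))
  have hg₀X2 : MemLp (fun ω => g₀ (X ω)) 2 P :=
    MemLp.of_bound (hg₀m.comp hX).aestronglyMeasurable Cbar
      (ae_of_all _ fun ω => by simpa [Real.norm_eq_abs] using hg₀b (X ω))
  have hDg1 : MemLp (fun ω => g₁ (X ω) - g₁₀ (X ω)) 2 P := hg₁X2.sub hg₁₀L2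
  have hDg0 : MemLp (fun ω => g₀ (X ω) - g₀₀ (X ω)) 2 P := hg₀X2.sub hg₀₀L2
  have hDg1sq : Integrable (fun ω => (g₁ (X ω) - g₁₀ (X ω))^2) P := hDg1.integrable_sq
  have hDg0sq : Integrable (fun ω => (g₀ (X ω) - g₀₀ (X ω))^2) P := hDg0.integrable_sq
  have hDesq : Integrable (fun ω => (e₁ (X ω) - e₁₀ (X ω))^2) P := by
    refine hbd_int _ (((he₁m.comp hX).sub (he₁₀m.comp hX)).pow_const 2) 1 fun ω => ?_
    have h1 := he₁v (X ω); have h2 := he₁₀val (X ω)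
    rw [abs_le]
    constructor <;> nlinarith [h1.1, h1.2, h2.1, h2.2]
  have hDpsq : Integrable (fun ω => (pp (X ω) - p₀ (X ω))^2) P := by
    refine hbd_int _ (((hppm.comp hX).sub (hp₀m.comp hX)).pow_const 2) 1 fun ω => ?_
    have h1 := hppv (X ω); have h2 := hp₀val (X ω)
    rw [abs_le]
    constructor <;> nlinarith [h1.1, h1.2, h2.1, h2.2, hp₀bound (X ω), hεp]
  have hYg1 : MemLp (fun ω => Y ω - g₁₀ (X ω)) 2 P := hY2.sub hg₁₀L2
  have hYg0 : MemLp (fun ω => Y ω - g₀₀ (X ω)) 2 P := hY2.sub hg₀₀L2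
  -- the six pieces
  set u1 : Ω → ℝ := fun ω => (1 - S ω) * (g₁ (X ω) - g₁₀ (X ω)) with hu1
  set u2 : Ω → ℝ := fun ω => -((1 - S ω) * (g₀ (X ω) - g₀₀ (X ω))) with hu2
  set u3 : Ω → ℝ := fun ω => S ω * A ω * (F1 (X ω) - F10 (X ω)) * (Y ω - g₁₀ (X ω)) with hu3
  set u4 : Ω → ℝ := fun ω => -(S ω * A ω * F1 (X ω) * (g₁ (X ω) - g₁₀ (X ω))) with hu4
  set u5 : Ω → ℝ :=
    fun ω => -(S ω * (1 - A ω) * (F0 (X ω) - F00 (X ω)) * (Y ω - g₀₀ (X ω))) with hu5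
  set u6 : Ω → ℝ := fun ω => S ω * (1 - A ω) * F0 (X ω) * (g₀ (X ω) - g₀₀ (X ω)) with hu6
  -- MemLp for the pieces
  have habs1 : ∀ ω : Ω, |1 - S ω| ≤ 1 := fun ω => by
    have h := hS01 ω; rw [abs_le]; constructor <;> linarith [h.1, h.2]
  have hu1L : MemLp u1 2 P := by
    refine MemLp.of_le_mul (c := 1) hDg1 ?_ (ae_of_all _ fun ω => ?_)
    · rw [hu1]
      exact ((measurable_const.sub hS).mul
        ((hg₁m.comp hX).sub (hg₁₀m.comp hX))).aestronglyMeasurable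
    · simp only [hu1, Real.norm_eq_abs, abs_mul, one_mul]
      exact mul_le_of_le_one_left (abs_nonneg _) (habs1 ω)
  have hu2L : MemLp u2 2 P := by
    refine MemLp.of_le_mul (c := 1) hDg0 ?_ (ae_of_all _ fun ω => ?_)
    · rw [hu2]
      exact (((measurable_const.sub hS).mul
        ((hg₀m.comp hX).sub (hg₀₀m.comp hX))).neg).aestronglyMeasurable
    · simp only [hu2, Real.norm_eq_abs, abs_neg, abs_mul, one_mul]
      exact mul_le_of_le_one_left (abs_nonneg _) (habs1 ω)
  have hfac3 : ∀ ω : Ω, |S ω * A ω * (F1 (X ω) - F10 (X ω))| ≤ B := by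
    intro ω
    rw [abs_mul, abs_mul]
    have h1 : |S ω| ≤ 1 := by
      have h := hS01 ω; rw [abs_le]; constructor <;> linarith [h.1, h.2]
    have h2 : |A ω| ≤ 1 := by
      have h := hA01 ω; rw [abs_le]; constructor <;> linarith [h.1, h.2]
    calc |S ω| * |A ω| * |F1 (X ω) - F10 (X ω)|
        ≤ 1 * 1 * B := by
          apply mul_le_mul (mul_le_mul h1 h2 (abs_nonneg _) (by norm_num)) (hF1d (X ω))
            (abs_nonneg _) (by norm_num)
    _ = B := by ring
  have hfac5 : ∀ ω : Ω, |S ω * (1 - A ω) * (F0 (X ω) - F00 (X ω))| ≤ B := by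
    intro ω
    rw [abs_mul, abs_mul]
    have h1 : |S ω| ≤ 1 := by
      have h := hS01 ω; rw [abs_le]; constructor <;> linarith [h.1, h.2]
    have h2 : |1 - A ω| ≤ 1 := by
      have h := hA01 ω; rw [abs_le]; constructor <;> linarith [h.1, h.2]
    calc |S ω| * |1 - A ω| * |F0 (X ω) - F00 (X ω)|
        ≤ 1 * 1 * B := by
          apply mul_le_mul (mul_le_mul h1 h2 (abs_nonneg _) (by norm_num)) (hF0d (X ω))
            (abs_nonneg _) (by norm_num)
    _ = B := by ring
  have hfac4 : ∀ ω : Ω, |S ω * A ω * F1 (X ω)| ≤ Cbar^2 := by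
    intro ω
    rw [abs_mul, abs_mul]
    have h1 : |S ω| ≤ 1 := by
      have h := hS01 ω; rw [abs_le]; constructor <;> linarith [h.1, h.2]
    have h2 : |A ω| ≤ 1 := by
      have h := hA01 ω; rw [abs_le]; constructor <;> linarith [h.1, h.2]
    have h3 : |F1 (X ω)| ≤ Cbar^2 := by
      rw [abs_of_nonneg (hF1x (X ω)).1]; exact (hF1x (X ω)).2
    calc |S ω| * |A ω| * |F1 (X ω)|
        ≤ 1 * 1 * Cbar^2 := by
          apply mul_le_mul (mul_le_mul h1 h2 (abs_nonneg _) (by norm_num)) h3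
            (abs_nonneg _) (by norm_num)
    _ = Cbar^2 := by ring
  have hfac6 : ∀ ω : Ω, |S ω * (1 - A ω) * F0 (X ω)| ≤ Cbar^2 := by
    intro ω
    rw [abs_mul, abs_mul]
    have h1 : |S ω| ≤ 1 := by
      have h := hS01 ω; rw [abs_le]; constructor <;> linarith [h.1, h.2]
    have h2 : |1 - A ω| ≤ 1 := by
      have h := hA01 ω; rw [abs_le]; constructor <;> linarith [h.1, h.2]
    have h3 : |F0 (X ω)| ≤ Cbar^2 := by
      rw [abs_of_nonneg (hF0x (X ω)).1]; exact (hF0x (X ω)).2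
    calc |S ω| * |1 - A ω| * |F0 (X ω)|
        ≤ 1 * 1 * Cbar^2 := by
          apply mul_le_mul (mul_le_mul h1 h2 (abs_nonneg _) (by norm_num)) h3
            (abs_nonneg _) (by norm_num)
    _ = Cbar^2 := by ring
  have hu3L : MemLp u3 2 P := by
    refine MemLp.of_le_mul (c := B) hYg1 ?_ (ae_of_all _ fun ω => ?_)
    · rw [hu3]
      exact (((hS.mul hA).mul ((hF1m.comp hX).sub (hF10m.comp hX))).mul
        (hY.sub (hg₁₀m.comp hX))).aestronglyMeasurable
    · simp only [hu3, Real.norm_eq_abs, abs_mul]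
      exact mul_le_mul_of_nonneg_right (by
        have := hfac3 ω; rwa [abs_mul, abs_mul] at this) (abs_nonneg _)
  have hu4L : MemLp u4 2 P := by
    refine MemLp.of_le_mul (c := Cbar^2) hDg1 ?_ (ae_of_all _ fun ω => ?_)
    · rw [hu4]
      exact ((((hS.mul hA).mul (hF1m.comp hX)).mul
        ((hg₁m.comp hX).sub (hg₁₀m.comp hX))).neg).aestronglyMeasurable
    · simp only [hu4, Real.norm_eq_abs, abs_neg, abs_mul]
      exact mul_le_mul_of_nonneg_right (by
        have := hfac4 ω; rwa [abs_mul, abs_mul] at this) (abs_nonneg _)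
  have hu5L : MemLp u5 2 P := by
    refine MemLp.of_le_mul (c := B) hYg0 ?_ (ae_of_all _ fun ω => ?_)
    · rw [hu5]
      exact ((((hS.mul (measurable_const.sub hA)).mul
        ((hF0m.comp hX).sub (hF00m.comp hX))).mul
        (hY.sub (hg₀₀m.comp hX))).neg).aestronglyMeasurable
    · simp only [hu5, Real.norm_eq_abs, abs_neg, abs_mul]
      exact mul_le_mul_of_nonneg_right (by
        have := hfac5 ω; rwa [abs_mul, abs_mul] at this) (abs_nonneg _)
  have hu6L : MemLp u6 2 P := by
    refine MemLp.of_le_mul (c := Cbar^2) hDg0 ?_ (ae_of_all _ fun ω => ?_)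
    · rw [hu6]
      exact (((hS.mul (measurable_const.sub hA)).mul (hF0m.comp hX)).mul
        ((hg₀m.comp hX).sub (hg₀₀m.comp hX))).aestronglyMeasurable
    · simp only [hu6, Real.norm_eq_abs, abs_mul]
      exact mul_le_mul_of_nonneg_right (by
        have := hfac6 ω; rwa [abs_mul, abs_mul] at this) (abs_nonneg _)
  have hu1sq : Integrable (fun ω => u1 ω^2) P := hu1L.integrable_sq
  have hu2sq : Integrable (fun ω => u2 ω^2) P := hu2L.integrable_sq
  have hu3sq : Integrable (fun ω => u3 ω^2) P := hu3L.integrable_sq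
  have hu4sq : Integrable (fun ω => u4 ω^2) P := hu4L.integrable_sq
  have hu5sq : Integrable (fun ω => u5 ω^2) P := hu5L.integrable_sq
  have hu6sq : Integrable (fun ω => u6 ω^2) P := hu6L.integrable_sq
  -- the pointwise decomposition
  have hdecomp : ∀ ω, transportedSignal X S A Y (g₁, g₀, e₁, pp) ω -
      transportedSignal X S A Y (g₁₀, g₀₀, e₁₀, p₀) ω
      = u1 ω + u2 ω + u3 ω + u4 ω + u5 ω + u6 ω := by
    intro ω
    simp only [hu1, hu2, hu3, hu4, hu5, hu6, hF1def, hF10def, hF0def, hF00def, transportedSignal]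
    exact signal_decomp (S ω) (A ω) (Y ω) (g₁ (X ω)) (g₀ (X ω)) (e₁ (X ω)) (pp (X ω))
      (g₁₀ (X ω)) (g₀₀ (X ω)) (e₁₀ (X ω)) (p₀ (X ω)) (hSval ω) (hAval ω)
      (he₁ne _) (he₁ne' _) (hppne _) (he₁₀ne _) (he₁₀ne' _) (hp₀ne _)
  have hptw : ∀ ω, ((if G (X ω) = i then (1:ℝ) else 0) *
      (transportedSignal X S A Y (g₁, g₀, e₁, pp) ω -
       transportedSignal X S A Y (g₁₀, g₀₀, e₁₀, p₀) ω))^2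
      ≤ 6*(u1 ω^2 + u2 ω^2 + u3 ω^2 + u4 ω^2 + u5 ω^2 + u6 ω^2) := by
    intro ω
    have h6 := six_sq (u1 ω) (u2 ω) (u3 ω) (u4 ω) (u5 ω) (u6 ω)
    rw [← hdecomp ω] at h6
    have hc : ((if G (X ω) = i then (1:ℝ) else 0))^2 ≤ 1 := by split_ifs <;> norm_num
    calc ((if G (X ω) = i then (1:ℝ) else 0) *
        (transportedSignal X S A Y (g₁, g₀, e₁, pp) ω -
         transportedSignal X S A Y (g₁₀, g₀₀, e₁₀, p₀) ω))^2
        = ((if G (X ω) = i then (1:ℝ) else 0))^2 *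
          (transportedSignal X S A Y (g₁, g₀, e₁, pp) ω -
           transportedSignal X S A Y (g₁₀, g₀₀, e₁₀, p₀) ω)^2 := by rw [mul_pow]
    _ ≤ 1 * (transportedSignal X S A Y (g₁, g₀, e₁, pp) ω -
           transportedSignal X S A Y (g₁₀, g₀₀, e₁₀, p₀) ω)^2 :=
        mul_le_mul_of_nonneg_right hc (sq_nonneg _)
    _ = (transportedSignal X S A Y (g₁, g₀, e₁, pp) ω -
           transportedSignal X S A Y (g₁₀, g₀₀, e₁₀, p₀) ω)^2 := one_mul _
    _ ≤ _ := h6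
  -- integrability of the sum, and the main split
  have hsum_int : Integrable
      (fun ω => u1 ω^2 + u2 ω^2 + u3 ω^2 + u4 ω^2 + u5 ω^2 + u6 ω^2) P :=
    ((((hu1sq.add hu2sq).add hu3sq).add hu4sq).add hu5sq).add hu6sq
  have hmain : ∫ ω, ((if G (X ω) = i then (1:ℝ) else 0) *
        (transportedSignal X S A Y (g₁, g₀, e₁, pp) ω -
         transportedSignal X S A Y (g₁₀, g₀₀, e₁₀, p₀) ω)) ^ 2 ∂P
      ≤ 6 * ((∫ ω, u1 ω^2 ∂P) + (∫ ω, u2 ω^2 ∂P) + (∫ ω, u3 ω^2 ∂P) + (∫ ω, u4 ω^2 ∂P)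
          + (∫ ω, u5 ω^2 ∂P) + (∫ ω, u6 ω^2 ∂P)) := by
    have h1 := integral_mono_of_nonneg (ae_of_all _ fun ω => sq_nonneg _)
      (hsum_int.const_mul 6) (ae_of_all _ hptw)
    rw [integral_const_mul] at h1
    have hI2 : Integrable (fun ω => u1 ω^2 + u2 ω^2) P := hu1sq.add hu2sq
    have hI3 : Integrable (fun ω => u1 ω^2 + u2 ω^2 + u3 ω^2) P := hI2.add hu3sq
    have hI4 : Integrable (fun ω => u1 ω^2 + u2 ω^2 + u3 ω^2 + u4 ω^2) P := hI3.add hu4sq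
    have hI5 : Integrable (fun ω => u1 ω^2 + u2 ω^2 + u3 ω^2 + u4 ω^2 + u5 ω^2) P :=
      hI4.add hu5sq
    rw [integral_add hI5 hu6sq, integral_add hI4 hu5sq, integral_add hI3 hu4sq,
      integral_add hI2 hu3sq, integral_add hu1sq hu2sq] at h1
    exact h1
  -- simple bounds
  have hb1 : ∫ ω, u1 ω^2 ∂P ≤ ∫ ω, (g₁ (X ω) - g₁₀ (X ω))^2 ∂P := by
    refine integral_mono hu1sq hDg1sq fun ω => ?_
    simp only [hu1]
    have h := hS01 ω
    have key : 0 ≤ (g₁ (X ω) - g₁₀ (X ω))^2 * (S ω * (2 - S ω)) :=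
      mul_nonneg (sq_nonneg _) (mul_nonneg h.1 (by linarith [h.2]))
    nlinarith [key]
  have hb2 : ∫ ω, u2 ω^2 ∂P ≤ ∫ ω, (g₀ (X ω) - g₀₀ (X ω))^2 ∂P := by
    refine integral_mono hu2sq hDg0sq fun ω => ?_
    simp only [hu2]
    have h := hS01 ω
    have key : 0 ≤ (g₀ (X ω) - g₀₀ (X ω))^2 * (S ω * (2 - S ω)) :=
      mul_nonneg (sq_nonneg _) (mul_nonneg h.1 (by linarith [h.2]))
    nlinarith [key]
  have hb4 : ∫ ω, u4 ω^2 ∂P ≤ Cbar^4 * ∫ ω, (g₁ (X ω) - g₁₀ (X ω))^2 ∂P := by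
    rw [← integral_const_mul]
    refine integral_mono hu4sq (hDg1sq.const_mul _) fun ω => ?_
    simp only [hu4]
    have h := abs_le.mp (hfac4 ω)
    have h2 : (S ω * A ω * F1 (X ω))^2 ≤ Cbar^4 := by
      have := sq_le_sq' h.1 h.2
      calc (S ω * A ω * F1 (X ω))^2 ≤ (Cbar^2)^2 := this
      _ = Cbar^4 := by ring
    calc (-(S ω * A ω * F1 (X ω) * (g₁ (X ω) - g₁₀ (X ω))))^2
        = (S ω * A ω * F1 (X ω))^2 * (g₁ (X ω) - g₁₀ (X ω))^2 := by ring
    _ ≤ Cbar^4 * (g₁ (X ω) - g₁₀ (X ω))^2 := mul_le_mul_of_nonneg_right h2 (sq_nonneg _)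
  have hb6 : ∫ ω, u6 ω^2 ∂P ≤ Cbar^4 * ∫ ω, (g₀ (X ω) - g₀₀ (X ω))^2 ∂P := by
    rw [← integral_const_mul]
    refine integral_mono hu6sq (hDg0sq.const_mul _) fun ω => ?_
    simp only [hu6]
    have h := abs_le.mp (hfac6 ω)
    have h2 : (S ω * (1 - A ω) * F0 (X ω))^2 ≤ Cbar^4 := by
      have := sq_le_sq' h.1 h.2
      calc (S ω * (1 - A ω) * F0 (X ω))^2 ≤ (Cbar^2)^2 := this
      _ = Cbar^4 := by ring
    calc (S ω * (1 - A ω) * F0 (X ω) * (g₀ (X ω) - g₀₀ (X ω)))^2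
        = (S ω * (1 - A ω) * F0 (X ω))^2 * (g₀ (X ω) - g₀₀ (X ω))^2 := by ring
    _ ≤ Cbar^4 * (g₀ (X ω) - g₀₀ (X ω))^2 := mul_le_mul_of_nonneg_right h2 (sq_nonneg _)
  -- the conditional-moment bounds
  set Z1 : Ω → ℝ :=
    fun ω' => (if S ω' = 1 ∧ A ω' = 1 then (1:ℝ) else 0) * (Y ω' - g₁₀ (X ω')) ^ 2 with hZ1def
  set Z0 : Ω → ℝ :=
    fun ω' => (if S ω' = 1 ∧ A ω' = 0 then (1:ℝ) else 0) * (Y ω' - g₀₀ (X ω')) ^ 2 with hZ0def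
  set H1 : Ω → ℝ := fun ω => (F1 (X ω) - F10 (X ω))^2 with hH1def
  set H0 : Ω → ℝ := fun ω => (F0 (X ω) - F00 (X ω))^2 with hH0def
  have hind1m : Measurable (fun ω => if S ω = 1 ∧ A ω = 1 then (1:ℝ) else 0) := by
    have hset : MeasurableSet {ω | S ω = 1 ∧ A ω = 1} :=
      (hS (measurableSet_singleton 1)).inter (hA (measurableSet_singleton 1))
    exact Measurable.ite hset measurable_const measurable_const
  have hind0m : Measurable (fun ω => if S ω = 1 ∧ A ω = 0 then (1:ℝ) else 0) := by
    have hset : MeasurableSet {ω | S ω = 1 ∧ A ω = 0} :=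
      (hS (measurableSet_singleton 1)).inter (hA (measurableSet_singleton 0))
    exact Measurable.ite hset measurable_const measurable_const
  have hZ1int : Integrable Z1 P := by
    rw [hZ1def]
    exact Integrable.bdd_mul hYg1.integrable_sq hind1m.aestronglyMeasurable
      (c := 1) (ae_of_all _ fun ω => by split_ifs <;> simp)
  have hZ0int : Integrable Z0 P := by
    rw [hZ0def]
    exact Integrable.bdd_mul hYg0.integrable_sq hind0m.aestronglyMeasurable
      (c := 1) (ae_of_all _ fun ω => by split_ifs <;> simp)
  have hH1m : Measurable H1 := by
    rw [hH1def]; exact ((hF1m.comp hX).sub (hF10m.comp hX)).pow_const 2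
  have hH0m : Measurable H0 := by
    rw [hH0def]; exact ((hF0m.comp hX).sub (hF00m.comp hX)).pow_const 2
  have hH1nng : ∀ ω, 0 ≤ H1 ω := fun ω => by simp only [hH1def]; positivity
  have hH0nng : ∀ ω, 0 ≤ H0 ω := fun ω => by simp only [hH0def]; positivity
  have hH1b : ∀ ω, |H1 ω| ≤ B^2 := by
    intro ω
    simp only [hH1def]
    rw [abs_of_nonneg (sq_nonneg _)]
    have h := abs_le.mp (hF1d (X ω))
    exact sq_le_sq' h.1 h.2
  have hH0b : ∀ ω, |H0 ω| ≤ B^2 := by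
    intro ω
    simp only [hH0def]
    rw [abs_of_nonneg (sq_nonneg _)]
    have h := abs_le.mp (hF0d (X ω))
    exact sq_le_sq' h.1 h.2
  have hH1int : Integrable H1 P := hbd_int _ hH1m (B^2) hH1b
  have hH0int : Integrable H0 P := hbd_int _ hH0m (B^2) hH0b
  have hH1Z1int : Integrable (H1 * Z1) P :=
    Integrable.bdd_mul hZ1int hH1m.aestronglyMeasurable
      (c := B^2) (ae_of_all _ fun ω => by simpa [Real.norm_eq_abs] using hH1b ω)
  have hH0Z0int : Integrable (H0 * Z0) P :=
    Integrable.bdd_mul hZ0int hH0m.aestronglyMeasurable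
      (c := B^2) (ae_of_all _ fun ω => by simpa [Real.norm_eq_abs] using hH0b ω)
  have hH1sm : StronglyMeasurable[MeasurableSpace.comap X inferInstance] H1 := by
    have hmeas : Measurable[MeasurableSpace.comap X inferInstance] H1 := by
      rw [hH1def]
      exact Measurable.pow_const (Measurable.sub (hF1m.comp hXm') (hF10m.comp hXm')) 2
    exact hmeas.stronglyMeasurable
  have hH0sm : StronglyMeasurable[MeasurableSpace.comap X inferInstance] H0 := by
    have hmeas : Measurable[MeasurableSpace.comap X inferInstance] H0 := by
      rw [hH0def]
      exact Measurable.pow_const (Measurable.sub (hF0m.comp hXm') (hF00m.comp hXm')) 2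
    exact hmeas.stronglyMeasurable
  have hpull1 : P[H1 * Z1|MeasurableSpace.comap X inferInstance]
      =ᵐ[P] H1 * P[Z1|MeasurableSpace.comap X inferInstance] :=
    condExp_mul_of_stronglyMeasurable_left hH1sm hH1Z1int hZ1int
  have hpull0 : P[H0 * Z0|MeasurableSpace.comap X inferInstance]
      =ᵐ[P] H0 * P[Z0|MeasurableSpace.comap X inferInstance] :=
    condExp_mul_of_stronglyMeasurable_left hH0sm hH0Z0int hZ0int
  have heq3 : ∀ ω, u3 ω^2 = H1 ω * Z1 ω := by
    intro ω
    simp only [hu3, hH1def, hZ1def]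
    rcases hSval ω with h | h <;> rcases hAval ω with h' | h' <;>
      simp [h, h'] <;> ring
  have heq5 : ∀ ω, u5 ω^2 = H0 ω * Z0 ω := by
    intro ω
    simp only [hu5, hH0def, hZ0def]
    rcases hSval ω with h | h <;> rcases hAval ω with h' | h' <;>
      simp [h, h'] <;> ring
  have hH1bound : ∫ ω, H1 ω ∂P
      ≤ 2*L^2*((∫ ω, (pp (X ω) - p₀ (X ω))^2 ∂P) + (∫ ω, (e₁ (X ω) - e₁₀ (X ω))^2 ∂P)) := by
    have step : ∫ ω, H1 ω ∂P
        ≤ ∫ ω, 2*L^2*((pp (X ω) - p₀ (X ω))^2 + (e₁ (X ω) - e₁₀ (X ω))^2) ∂P := by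
      refine integral_mono hH1int ((hDpsq.add hDesq).const_mul _) fun ω => ?_
      simp only [hH1def, hF1def, hF10def, hLdef]
      exact Fdiff_sq_le hCbar hεp hεe (hppb _) (hppv _).2.le (hp₀bound _) (hp₀val _).2
        (he₁b _) (he₁v _).2.le (he₁₀bound _).1 (he₁₀val _).2.le
    rwa [integral_const_mul, integral_add hDpsq hDesq] at step
  have hH0bound : ∫ ω, H0 ω ∂P
      ≤ 2*L^2*((∫ ω, (pp (X ω) - p₀ (X ω))^2 ∂P) + (∫ ω, (e₁ (X ω) - e₁₀ (X ω))^2 ∂P)) := by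
    have step : ∫ ω, H0 ω ∂P
        ≤ ∫ ω, 2*L^2*((pp (X ω) - p₀ (X ω))^2 + (e₁ (X ω) - e₁₀ (X ω))^2) ∂P := by
      refine integral_mono hH0int ((hDpsq.add hDesq).const_mul _) fun ω => ?_
      simp only [hH0def, hF0def, hF00def, hLdef]
      have h := Fdiff_sq_le (p := pp (X ω)) (p₀ := p₀ (X ω)) (e := 1 - e₁ (X ω))
        (e₀ := 1 - e₁₀ (X ω)) hCbar hεp hεe (hppb _) (hppv _).2.le (hp₀bound _) (hp₀val _).2
        (he₁b' _) (by linarith [(he₁v (X ω)).1]) (by linarith [(he₁₀bound (X ω)).2])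
        (by linarith [(he₁₀val (X ω)).1])
      have hring : ((pp (X ω) - p₀ (X ω))^2 + ((1 - e₁ (X ω)) - (1 - e₁₀ (X ω)))^2)
          = ((pp (X ω) - p₀ (X ω))^2 + (e₁ (X ω) - e₁₀ (X ω))^2) := by ring
      rw [hring] at h
      exact h
    rwa [integral_const_mul, integral_add hDpsq hDesq] at step
  have hb3 : ∫ ω, u3 ω^2 ∂P
      ≤ σ2 * (2*L^2*((∫ ω, (pp (X ω) - p₀ (X ω))^2 ∂P)
          + (∫ ω, (e₁ (X ω) - e₁₀ (X ω))^2 ∂P))) := by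
    have e1 : ∫ ω, u3 ω^2 ∂P = ∫ ω, (H1 * Z1) ω ∂P :=
      integral_congr_ae (ae_of_all _ fun ω => heq3 ω)
    have e2 : ∫ ω, (H1 * Z1) ω ∂P
        = ∫ ω, (P[H1 * Z1|MeasurableSpace.comap X inferInstance]) ω ∂P :=
      (integral_condExp hmle).symm
    have e3 : ∫ ω, (P[H1 * Z1|MeasurableSpace.comap X inferInstance]) ω ∂P
        = ∫ ω, (H1 * P[Z1|MeasurableSpace.comap X inferInstance]) ω ∂P :=
      integral_congr_ae hpull1
    have e4 : ∫ ω, (H1 * P[Z1|MeasurableSpace.comap X inferInstance]) ω ∂P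
        ≤ ∫ ω, σ2 * H1 ω ∂P := by
      refine integral_mono_ae ?_ (hH1int.const_mul σ2) ?_
      · exact Integrable.bdd_mul (c := B^2) integrable_condExp hH1m.aestronglyMeasurable
          (ae_of_all _ fun ω => by simpa [Real.norm_eq_abs] using hH1b ω)
      · filter_upwards [hc1] with ω hω
        simp only [Pi.mul_apply]
        calc H1 ω * (P[Z1|MeasurableSpace.comap X inferInstance]) ω
            ≤ H1 ω * σ2 := mul_le_mul_of_nonneg_left hω (hH1nng ω)
        _ = σ2 * H1 ω := mul_comm _ _
    rw [e1, e2, e3]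
    refine e4.trans ?_
    rw [integral_const_mul]
    exact mul_le_mul_of_nonneg_left hH1bound hσ2
  have hb5 : ∫ ω, u5 ω^2 ∂P
      ≤ σ2 * (2*L^2*((∫ ω, (pp (X ω) - p₀ (X ω))^2 ∂P)
          + (∫ ω, (e₁ (X ω) - e₁₀ (X ω))^2 ∂P))) := by
    have e1 : ∫ ω, u5 ω^2 ∂P = ∫ ω, (H0 * Z0) ω ∂P :=
      integral_congr_ae (ae_of_all _ fun ω => heq5 ω)
    have e2 : ∫ ω, (H0 * Z0) ω ∂P
        = ∫ ω, (P[H0 * Z0|MeasurableSpace.comap X inferInstance]) ω ∂P :=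
      (integral_condExp hmle).symm
    have e3 : ∫ ω, (P[H0 * Z0|MeasurableSpace.comap X inferInstance]) ω ∂P
        = ∫ ω, (H0 * P[Z0|MeasurableSpace.comap X inferInstance]) ω ∂P :=
      integral_congr_ae hpull0
    have e4 : ∫ ω, (H0 * P[Z0|MeasurableSpace.comap X inferInstance]) ω ∂P
        ≤ ∫ ω, σ2 * H0 ω ∂P := by
      refine integral_mono_ae ?_ (hH0int.const_mul σ2) ?_
      · exact Integrable.bdd_mul (c := B^2) integrable_condExp hH0m.aestronglyMeasurable
          (ae_of_all _ fun ω => by simpa [Real.norm_eq_abs] using hH0b ω)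
      · filter_upwards [hc0] with ω hω
        simp only [Pi.mul_apply]
        calc H0 ω * (P[Z0|MeasurableSpace.comap X inferInstance]) ω
            ≤ H0 ω * σ2 := mul_le_mul_of_nonneg_left hω (hH0nng ω)
        _ = σ2 * H0 ω := mul_comm _ _
    rw [e1, e2, e3]
    refine e4.trans ?_
    rw [integral_const_mul]
    exact mul_le_mul_of_nonneg_left hH0bound hσ2
  -- final assembly
  have hIg1 : 0 ≤ ∫ ω, (g₁ (X ω) - g₁₀ (X ω))^2 ∂P := integral_nonneg fun ω => sq_nonneg _
  have hIg0 : 0 ≤ ∫ ω, (g₀ (X ω) - g₀₀ (X ω))^2 ∂P := integral_nonneg fun ω => sq_nonneg _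
  have hIe : 0 ≤ ∫ ω, (e₁ (X ω) - e₁₀ (X ω))^2 ∂P := integral_nonneg fun ω => sq_nonneg _
  have hIp : 0 ≤ ∫ ω, (pp (X ω) - p₀ (X ω))^2 ∂P := integral_nonneg fun ω => sq_nonneg _
  have hprod1 : 0 ≤ σ2 * L^2 * (∫ ω, (g₁ (X ω) - g₁₀ (X ω))^2 ∂P) :=
    mul_nonneg (mul_nonneg hσ2 (sq_nonneg _)) hIg1
  have hprod0 : 0 ≤ σ2 * L^2 * (∫ ω, (g₀ (X ω) - g₀₀ (X ω))^2 ∂P) :=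
    mul_nonneg (mul_nonneg hσ2 (sq_nonneg _)) hIg0
  have hC4Ie : 0 ≤ Cbar^4 * ∫ ω, (e₁ (X ω) - e₁₀ (X ω))^2 ∂P :=
    mul_nonneg (by positivity) hIe
  have hC4Ip : 0 ≤ Cbar^4 * ∫ ω, (pp (X ω) - p₀ (X ω))^2 ∂P :=
    mul_nonneg (by positivity) hIp
  nlinarith [hmain, hb1, hb2, hb3, hb4, hb5, hb6, hprod1, hprod0, hC4Ie, hC4Ip,
    hIg1, hIg0, hIe, hIp]

/-- Uniform mean-squared-error bound over the nuisance neighborhoods: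
if `max(𝐠_n, 𝐞_n, 𝐩_n) → 0`, then
`sup_{η ∈ T_n} E[(1{G(X)=i}·(𝒴(η) − 𝒴(η₀)))²] → 0`. -/
theorem uniform_signal_mse_vanishes
    {Ω : Type*} [MeasurableSpace Ω] (P : Measure Ω) [IsProbabilityMeasure P]
    {𝒳 : Type*} [MeasurableSpace 𝒳]
    (X : Ω → 𝒳) (S A Y : Ω → ℝ)
    (hX : Measurable X) (hS : Measurable S) (hA : Measurable A) (hY : Measurable Y)
    (hSval : ∀ ω, S ω = 0 ∨ S ω = 1) (hAval : ∀ ω, A ω = 0 ∨ A ω = 1)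
    (hY2 : MemLp Y 2 P)
    -- groups
    {d : ℕ} (G : 𝒳 → Fin d) (hG : Measurable G) (i : Fin d)
    -- true nuisance functions
    (p₀ e₁₀ g₁₀ g₀₀ : 𝒳 → ℝ)
    (hp₀m : Measurable p₀) (he₁₀m : Measurable e₁₀)
    (hg₁₀m : Measurable g₁₀) (hg₀₀m : Measurable g₀₀)
    (hp₀val : ∀ x, p₀ x ∈ Set.Ioc (0 : ℝ) 1) (he₁₀val : ∀ x, e₁₀ x ∈ Set.Ioo (0 : ℝ) 1)
    (hp₀ : P[S | MeasurableSpace.comap X inferInstance] =ᵐ[P] fun ω => p₀ (X ω))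
    (he₁₀ : P[fun ω => S ω * A ω | MeasurableSpace.comap X inferInstance] =ᵐ[P]
      fun ω => p₀ (X ω) * e₁₀ (X ω))
    (hg₁₀ : P[fun ω => (if S ω = 1 ∧ A ω = 1 then (1 : ℝ) else 0) * Y ω |
        MeasurableSpace.comap X inferInstance] =ᵐ[P]
      fun ω => p₀ (X ω) * e₁₀ (X ω) * g₁₀ (X ω))
    (hg₀₀ : P[fun ω => (if S ω = 1 ∧ A ω = 0 then (1 : ℝ) else 0) * Y ω |
        MeasurableSpace.comap X inferInstance] =ᵐ[P]
      fun ω => p₀ (X ω) * (1 - e₁₀ (X ω)) * g₀₀ (X ω))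
    -- the neighborhoods T_n of nuisance vectors η = (g₁, g₀, e₁, p)
    (Cbar : ℝ) (hCbar : 1 ≤ Cbar)
    (T : ℕ → Set ((𝒳 → ℝ) × (𝒳 → ℝ) × (𝒳 → ℝ) × (𝒳 → ℝ)))
    (hT : ∀ n, ∀ η ∈ T n,
      Measurable η.1 ∧ Measurable η.2.1 ∧ Measurable η.2.2.1 ∧ Measurable η.2.2.2 ∧
      (∀ x, η.2.2.1 x ∈ Set.Ioo (0 : ℝ) 1) ∧ (∀ x, η.2.2.2 x ∈ Set.Ioo (0 : ℝ) 1) ∧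
      (∀ x, 1 / Cbar ≤ η.2.2.2 x) ∧ (∀ x, 1 / Cbar ≤ η.2.2.1 x) ∧
      (∀ x, 1 / Cbar ≤ 1 - η.2.2.1 x) ∧
      (∀ x, |η.1 x| ≤ Cbar) ∧ (∀ x, |η.2.1 x| ≤ Cbar))
    -- positivity constants
    (εp εe : ℝ) (hεp : εp ∈ Set.Ioo (0 : ℝ) 1) (hεe : εe ∈ Set.Ioo (0 : ℝ) 1)
    (hp₀bound : ∀ x, εp ≤ p₀ x) (he₁₀bound : ∀ x, εe ≤ e₁₀ x ∧ e₁₀ x ≤ 1 - εe)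
    -- conditional second-moment bounds of the outcome residuals
    (σb2 : ℝ)
    (hmom1 : ∀ᵐ ω ∂P,
      (P[fun ω' => (if S ω' = 1 ∧ A ω' = 1 then (1 : ℝ) else 0) * (Y ω' - g₁₀ (X ω')) ^ 2 |
        MeasurableSpace.comap X inferInstance]) ω ≤ σb2 * p₀ (X ω) * e₁₀ (X ω))
    (hmom0 : ∀ᵐ ω ∂P,
      (P[fun ω' => (if S ω' = 1 ∧ A ω' = 0 then (1 : ℝ) else 0) * (Y ω' - g₀₀ (X ω')) ^ 2 |
        MeasurableSpace.comap X inferInstance]) ω ≤ σb2 * p₀ (X ω) * (1 - e₁₀ (X ω)))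
    -- the worst-case root-mean-square error sequences 𝐠_n, 𝐞_n, 𝐩_n (finite)
    (gn en pn : ℕ → ℝ)
    (hgnB : ∀ n, BddAbove {x : ℝ | ∃ η ∈ T n,
      x = max (Real.sqrt (∫ ω, (η.1 (X ω) - g₁₀ (X ω)) ^ 2 ∂P))
              (Real.sqrt (∫ ω, (η.2.1 (X ω) - g₀₀ (X ω)) ^ 2 ∂P))})
    (hgn : ∀ n, gn n = sSup {x : ℝ | ∃ η ∈ T n,
      x = max (Real.sqrt (∫ ω, (η.1 (X ω) - g₁₀ (X ω)) ^ 2 ∂P))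
              (Real.sqrt (∫ ω, (η.2.1 (X ω) - g₀₀ (X ω)) ^ 2 ∂P))})
    (henB : ∀ n, BddAbove {x : ℝ | ∃ η ∈ T n,
      x = Real.sqrt (∫ ω, (η.2.2.1 (X ω) - e₁₀ (X ω)) ^ 2 ∂P)})
    (hen : ∀ n, en n = sSup {x : ℝ | ∃ η ∈ T n,
      x = Real.sqrt (∫ ω, (η.2.2.1 (X ω) - e₁₀ (X ω)) ^ 2 ∂P)})
    (hpnB : ∀ n, BddAbove {x : ℝ | ∃ η ∈ T n,
      x = Real.sqrt (∫ ω, (η.2.2.2 (X ω) - p₀ (X ω)) ^ 2 ∂P)})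
    (hpn : ∀ n, pn n = sSup {x : ℝ | ∃ η ∈ T n,
      x = Real.sqrt (∫ ω, (η.2.2.2 (X ω) - p₀ (X ω)) ^ 2 ∂P)})
    -- the rate condition
    (hrate : Tendsto (fun n : ℕ => max (gn n) (max (en n) (pn n))) atTop (𝓝 0)) :
    Tendsto (fun n : ℕ =>
        sSup {x : ℝ | ∃ η ∈ T n,
          x = ∫ ω, ((if G (X ω) = i then (1 : ℝ) else 0) *
            (transportedSignal X S A Y η ω -
              transportedSignal X S A Y (g₁₀, g₀₀, e₁₀, p₀) ω)) ^ 2 ∂P})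
      atTop (𝓝 0) := by
    classical
  have hmle := hX.comap_le
  haveI : SigmaFinite (P.trim hmle) := by
    have : IsFiniteMeasure (P.trim hmle) := isFiniteMeasure_trim hmle
    infer_instance
  have hεp0 : 0 < εp := hεp.1
  have hεe0 : 0 < εe := hεe.1
  set σ2 : ℝ := max σb2 0 with hσ2def
  have hσ2 : 0 ≤ σ2 := le_max_right _ _
  -- massaged conditional second-moment bounds
  have hc1 : (P[fun ω' => (if S ω' = 1 ∧ A ω' = 1 then (1 : ℝ) else 0) * (Y ω' - g₁₀ (X ω')) ^ 2 |
      MeasurableSpace.comap X inferInstance]) ≤ᵐ[P] fun _ => σ2 := by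
    filter_upwards [hmom1] with ω h
    have ha := hp₀val (X ω); have hb := he₁₀val (X ω)
    have h1 : σb2 * p₀ (X ω) * e₁₀ (X ω) ≤ σ2 * (p₀ (X ω) * e₁₀ (X ω)) := by
      rw [mul_assoc]
      exact mul_le_mul_of_nonneg_right (le_max_left _ _)
        (mul_nonneg ha.1.le hb.1.le)
    have h2 : σ2 * (p₀ (X ω) * e₁₀ (X ω)) ≤ σ2 * 1 := by
      apply mul_le_mul_of_nonneg_left ?_ hσ2
      nlinarith [ha.1, ha.2, hb.1, hb.2]
    simp only [mul_one] at h2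
    exact le_trans h (le_trans h1 h2)
  have hc0 : (P[fun ω' => (if S ω' = 1 ∧ A ω' = 0 then (1 : ℝ) else 0) * (Y ω' - g₀₀ (X ω')) ^ 2 |
      MeasurableSpace.comap X inferInstance]) ≤ᵐ[P] fun _ => σ2 := by
    filter_upwards [hmom0] with ω h
    have ha := hp₀val (X ω); have hb := he₁₀val (X ω)
    have h1 : σb2 * p₀ (X ω) * (1 - e₁₀ (X ω)) ≤ σ2 * (p₀ (X ω) * (1 - e₁₀ (X ω))) := by
      rw [mul_assoc]
      exact mul_le_mul_of_nonneg_right (le_max_left _ _)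
        (mul_nonneg ha.1.le (by linarith [hb.2]))
    have h2 : σ2 * (p₀ (X ω) * (1 - e₁₀ (X ω))) ≤ σ2 * 1 := by
      apply mul_le_mul_of_nonneg_left ?_ hσ2
      nlinarith [ha.1, ha.2, hb.1, hb.2]
    simp only [mul_one] at h2
    exact le_trans h (le_trans h1 h2)
  -- square-integrability of the true outcome regressions
  have hg₁₀L2 : MemLp (fun ω => g₁₀ (X ω)) 2 P := by
    have hind : MemLp (fun ω => (if S ω = 1 ∧ A ω = 1 then (1:ℝ) else 0) * Y ω) 2 P := by
      refine MemLp.of_le hY2 ?_ (ae_of_all _ fun ω => ?_)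
      · have hset : MeasurableSet {ω | S ω = 1 ∧ A ω = 1} :=
          (hS (measurableSet_singleton 1)).inter (hA (measurableSet_singleton 1))
        exact ((Measurable.ite hset measurable_const measurable_const).mul
          hY).aestronglyMeasurable
      · simp only [Real.norm_eq_abs, abs_mul]
        split_ifs <;> simp [abs_nonneg]
    have hcond : MemLp (P[fun ω => (if S ω = 1 ∧ A ω = 1 then (1:ℝ) else 0) * Y ω |
        MeasurableSpace.comap X inferInstance]) 2 P := memLp_two_condexp hmle P hind
    have hprod : MemLp (fun ω => p₀ (X ω) * e₁₀ (X ω) * g₁₀ (X ω)) 2 P := hcond.ae_eq hg₁₀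
    refine MemLp.of_le_mul (c := 1/(εp*εe)) hprod
      ((hg₁₀m.comp hX).aestronglyMeasurable) (ae_of_all _ fun ω => ?_)
    have hpe : 0 < p₀ (X ω) * e₁₀ (X ω) :=
      mul_pos (hp₀val (X ω)).1 (he₁₀val (X ω)).1
    have hεpe : 0 < εp * εe := mul_pos hεp0 hεe0
    have hle : εp * εe ≤ p₀ (X ω) * e₁₀ (X ω) :=
      mul_le_mul (hp₀bound (X ω)) (he₁₀bound (X ω)).1 hεe0.le (hp₀val (X ω)).1.le
    simp only [Real.norm_eq_abs]
    rw [abs_mul, abs_of_pos hpe]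
    rw [div_mul_eq_mul_div, le_div_iff₀ hεpe]
    calc |g₁₀ (X ω)| * (εp * εe) ≤ |g₁₀ (X ω)| * (p₀ (X ω) * e₁₀ (X ω)) :=
          mul_le_mul_of_nonneg_left hle (abs_nonneg _)
    _ = 1 * (p₀ (X ω) * e₁₀ (X ω) * |g₁₀ (X ω)|) := by ring
  have hg₀₀L2 : MemLp (fun ω => g₀₀ (X ω)) 2 P := by
    have hind : MemLp (fun ω => (if S ω = 1 ∧ A ω = 0 then (1:ℝ) else 0) * Y ω) 2 P := by
      refine MemLp.of_le hY2 ?_ (ae_of_all _ fun ω => ?_)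
      · have hset : MeasurableSet {ω | S ω = 1 ∧ A ω = 0} :=
          (hS (measurableSet_singleton 1)).inter (hA (measurableSet_singleton 0))
        exact ((Measurable.ite hset measurable_const measurable_const).mul
          hY).aestronglyMeasurable
      · simp only [Real.norm_eq_abs, abs_mul]
        split_ifs <;> simp [abs_nonneg]
    have hcond : MemLp (P[fun ω => (if S ω = 1 ∧ A ω = 0 then (1:ℝ) else 0) * Y ω |
        MeasurableSpace.comap X inferInstance]) 2 P := memLp_two_condexp hmle P hind
    have hprod : MemLp (fun ω => p₀ (X ω) * (1 - e₁₀ (X ω)) * g₀₀ (X ω)) 2 P := hcond.ae_eq hg₀₀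
    refine MemLp.of_le_mul (c := 1/(εp*εe)) hprod
      ((hg₀₀m.comp hX).aestronglyMeasurable) (ae_of_all _ fun ω => ?_)
    have hpe : 0 < p₀ (X ω) * (1 - e₁₀ (X ω)) :=
      mul_pos (hp₀val (X ω)).1 (by linarith [(he₁₀val (X ω)).2])
    have hεpe : 0 < εp * εe := mul_pos hεp0 hεe0
    have hle : εp * εe ≤ p₀ (X ω) * (1 - e₁₀ (X ω)) :=
      mul_le_mul (hp₀bound (X ω)) (by linarith [(he₁₀bound (X ω)).2]) hεe0.le
        (hp₀val (X ω)).1.le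
    simp only [Real.norm_eq_abs]
    rw [abs_mul, abs_of_pos hpe]
    rw [div_mul_eq_mul_div, le_div_iff₀ hεpe]
    calc |g₀₀ (X ω)| * (εp * εe) ≤ |g₀₀ (X ω)| * (p₀ (X ω) * (1 - e₁₀ (X ω))) :=
          mul_le_mul_of_nonneg_left hle (abs_nonneg _)
    _ = 1 * (p₀ (X ω) * (1 - e₁₀ (X ω)) * |g₀₀ (X ω)|) := by ring
  -- the uniform constant
  set K : ℝ := 6 * (1 + Cbar^4) + 24 * σ2 * (Cbar^2/(εp*εe))^2 with hKdef
  have hK0 : 0 ≤ K := by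
    rw [hKdef]
    have h1 : (0:ℝ) ≤ Cbar^4 := by positivity
    have h2 : (0:ℝ) ≤ 24 * σ2 * (Cbar^2/(εp*εe))^2 := by positivity
    linarith
  -- nonnegativity of the error indices
  have hgn0 : ∀ n, 0 ≤ gn n := by
    intro n
    rw [hgn n]
    refine Real.sSup_nonneg fun x hx => ?_
    obtain ⟨η, hη, rfl⟩ := hx
    exact le_max_of_le_left (Real.sqrt_nonneg _)
  have hen0 : ∀ n, 0 ≤ en n := by
    intro n
    rw [hen n]
    refine Real.sSup_nonneg fun x hx => ?_
    obtain ⟨η, hη, rfl⟩ := hx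
    exact Real.sqrt_nonneg _
  have hpn0 : ∀ n, 0 ≤ pn n := by
    intro n
    rw [hpn n]
    refine Real.sSup_nonneg fun x hx => ?_
    obtain ⟨η, hη, rfl⟩ := hx
    exact Real.sqrt_nonneg _
  -- the key uniform bound
  have key : ∀ n, ∀ η ∈ T n,
      (∫ ω, ((if G (X ω) = i then (1 : ℝ) else 0) *
        (transportedSignal X S A Y η ω -
          transportedSignal X S A Y (g₁₀, g₀₀, e₁₀, p₀) ω)) ^ 2 ∂P)
      ≤ K * (2*(gn n)^2 + (en n)^2 + (pn n)^2) := by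
    intro n η hη
    obtain ⟨hg₁m', hg₀m', he₁m', hppm', he₁v, hppv, hppb', he₁b', he₁b'', hg₁b', hg₀b'⟩ :=
      hT n η hη
    have hb := per_eta_bound P X S A Y hX hS hA hY hSval hAval hY2 G i p₀ e₁₀ g₁₀ g₀₀
      hp₀m he₁₀m hg₁₀m hg₀₀m hg₁₀L2 hg₀₀L2 hp₀val he₁₀val Cbar hCbar εp εe hεp0 hεe0
      hp₀bound he₁₀bound σ2 hσ2 hc1 hc0 η.1 η.2.1 η.2.2.1 η.2.2.2
      hg₁m' hg₀m' he₁m' hppm' he₁v hppv hppb' he₁b' he₁b'' hg₁b' hg₀b'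
    -- bound the four integrals by the sup indices
    have hIg1nn : 0 ≤ ∫ ω, (η.1 (X ω) - g₁₀ (X ω))^2 ∂P := integral_nonneg fun ω => sq_nonneg _
    have hIg0nn : 0 ≤ ∫ ω, (η.2.1 (X ω) - g₀₀ (X ω))^2 ∂P := integral_nonneg fun ω => sq_nonneg _
    have hIenn : 0 ≤ ∫ ω, (η.2.2.1 (X ω) - e₁₀ (X ω))^2 ∂P :=
      integral_nonneg fun ω => sq_nonneg _
    have hIpnn : 0 ≤ ∫ ω, (η.2.2.2 (X ω) - p₀ (X ω))^2 ∂P :=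
      integral_nonneg fun ω => sq_nonneg _
    have hmax : max (Real.sqrt (∫ ω, (η.1 (X ω) - g₁₀ (X ω)) ^ 2 ∂P))
        (Real.sqrt (∫ ω, (η.2.1 (X ω) - g₀₀ (X ω)) ^ 2 ∂P)) ≤ gn n := by
      rw [hgn n]
      exact le_csSup (hgnB n) ⟨η, hη, rfl⟩
    have hIg1 : ∫ ω, (η.1 (X ω) - g₁₀ (X ω))^2 ∂P ≤ (gn n)^2 := by
      rw [← Real.sq_sqrt hIg1nn]
      exact pow_le_pow_left₀ (Real.sqrt_nonneg _) (le_trans (le_max_left _ _) hmax) 2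
    have hIg0 : ∫ ω, (η.2.1 (X ω) - g₀₀ (X ω))^2 ∂P ≤ (gn n)^2 := by
      rw [← Real.sq_sqrt hIg0nn]
      exact pow_le_pow_left₀ (Real.sqrt_nonneg _) (le_trans (le_max_right _ _) hmax) 2
    have hIe : ∫ ω, (η.2.2.1 (X ω) - e₁₀ (X ω))^2 ∂P ≤ (en n)^2 := by
      rw [← Real.sq_sqrt hIenn]
      refine pow_le_pow_left₀ (Real.sqrt_nonneg _) ?_ 2
      rw [hen n]
      exact le_csSup (henB n) ⟨η, hη, rfl⟩
    have hIp : ∫ ω, (η.2.2.2 (X ω) - p₀ (X ω))^2 ∂P ≤ (pn n)^2 := by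
      rw [← Real.sq_sqrt hIpnn]
      refine pow_le_pow_left₀ (Real.sqrt_nonneg _) ?_ 2
      rw [hpn n]
      exact le_csSup (hpnB n) ⟨η, hη, rfl⟩
    calc (∫ ω, ((if G (X ω) = i then (1 : ℝ) else 0) *
        (transportedSignal X S A Y η ω -
          transportedSignal X S A Y (g₁₀, g₀₀, e₁₀, p₀) ω)) ^ 2 ∂P)
        ≤ K * ((∫ ω, (η.1 (X ω) - g₁₀ (X ω))^2 ∂P) + (∫ ω, (η.2.1 (X ω) - g₀₀ (X ω))^2 ∂P) +
          (∫ ω, (η.2.2.1 (X ω) - e₁₀ (X ω))^2 ∂P) + (∫ ω, (η.2.2.2 (X ω) - p₀ (X ω))^2 ∂P)) :=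
        hb
    _ ≤ K * (2*(gn n)^2 + (en n)^2 + (pn n)^2) := by
        apply mul_le_mul_of_nonneg_left ?_ hK0
        linarith
  -- the sup sequence is squeezed between 0 and a vanishing sequence
  have hsup_le : ∀ n, sSup {x : ℝ | ∃ η ∈ T n,
      x = ∫ ω, ((if G (X ω) = i then (1 : ℝ) else 0) *
        (transportedSignal X S A Y η ω -
          transportedSignal X S A Y (g₁₀, g₀₀, e₁₀, p₀) ω)) ^ 2 ∂P}
      ≤ K * (2*(gn n)^2 + (en n)^2 + (pn n)^2) := by
    intro n
    refine Real.sSup_le (fun x hx => ?_) ?_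
    · obtain ⟨η, hη, rfl⟩ := hx
      exact key n η hη
    · exact mul_nonneg hK0 (by positivity)
  have hsup_nn : ∀ n, 0 ≤ sSup {x : ℝ | ∃ η ∈ T n,
      x = ∫ ω, ((if G (X ω) = i then (1 : ℝ) else 0) *
        (transportedSignal X S A Y η ω -
          transportedSignal X S A Y (g₁₀, g₀₀, e₁₀, p₀) ω)) ^ 2 ∂P} := by
    intro n
    refine Real.sSup_nonneg fun x hx => ?_
    obtain ⟨η, hη, rfl⟩ := hx
    exact integral_nonneg fun ω => sq_nonneg _
  -- the vanishing majorant
  have hgnlim : Tendsto gn atTop (𝓝 0) :=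
    squeeze_zero hgn0 (fun n => le_max_left _ _) hrate
  have henlim : Tendsto en atTop (𝓝 0) :=
    squeeze_zero hen0 (fun n => le_trans (le_max_left _ _) (le_max_right _ _)) hrate
  have hpnlim : Tendsto pn atTop (𝓝 0) :=
    squeeze_zero hpn0 (fun n => le_trans (le_max_right _ _) (le_max_right _ _)) hrate
  have hg2 : Tendsto (fun n => (gn n)^2) atTop (𝓝 0) := by
    simpa [pow_two] using hgnlim.mul hgnlim
  have he2 : Tendsto (fun n => (en n)^2) atTop (𝓝 0) := by
    simpa [pow_two] using henlim.mul henlim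
  have hp2 : Tendsto (fun n => (pn n)^2) atTop (𝓝 0) := by
    simpa [pow_two] using hpnlim.mul hpnlim
  have hmaj : Tendsto (fun n => K * (2*(gn n)^2 + (en n)^2 + (pn n)^2)) atTop (𝓝 0) := by
    have h := ((hg2.const_mul 2).add he2).add hp2
    simpa using h.const_mul K
  exact squeeze_zero hsup_nn hsup_le hmaj
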